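/- For every N > 0 and t > 0, sup_{ε > 0} E [ (1/ε) ∫₀ᵗ σ̂²(ε⁻¹W₁(s)) 𝟙_{{|ε⁻¹W₁(s)| > N}} ds ] ≤ C ‖σ̂² 𝟙_{{|x| > N}}‖_{L¹(ℝ)} √t for an absolute constant C; in particular, since σ̂² ∈ L¹(ℝ), this bound tends to 0 as N → ∞ uniformly in ε. -/

import Mathlib

open MeasureTheory ProbabilityTheory Filter Set Topology Matrix
open scoped Classical

noncomputable section

namespace PGS

variable {Ω : Type*} {mΩ : MeasurableSpace Ω}

/-- vectors in `ℝ^d` -/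
abbrev Vec (d : ℕ) := Fin d → ℝ

/-- `d × d` real matrices -/
abbrev Mat (d : ℕ) := Matrix (Fin d) (Fin d) ℝ

/-- Euclidean inner product -/
def dotp {d : ℕ} (v w : Vec d) : ℝ := ∑ i, v i * w i

/-- a one-dimensional standard Brownian motion: starts at `0`, has a.s. continuous paths, and has
independent Gaussian increments `W t - W s ~ N(0, t - s)`. -/
def IsBM (P : Measure Ω) (W : Ω → ℝ → ℝ) : Prop :=
  (∀ ω, W ω 0 = 0) ∧
  (∀ t : ℝ, Measurable fun ω => W ω t) ∧
  (∀ᵐ ω ∂P, Continuous (W ω)) ∧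
  (∀ s t : ℝ, 0 ≤ s → s ≤ t →
    P.map (fun ω => W ω t - W ω s) = gaussianReal 0 (Real.toNNReal (t - s))) ∧
  (∀ (n : ℕ) (t : ℕ → ℝ), Monotone t → 0 ≤ t 0 →
    iIndepFun
      (fun (i : Fin n) ω => W ω (t (i + 1)) - W ω (t i)) P)

/-- a `d`-dimensional standard Brownian motion: the coordinates are independent one-dimensional
standard Brownian motions. -/
def IsBMVec (d : ℕ) (P : Measure Ω) (W : Ω → ℝ → Vec d) : Prop :=
  (∀ i, IsBM P fun ω t => W ω t i) ∧
  iIndepFun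
    (fun (i : Fin d) ω => fun t => W ω t i) P

/-- the local time field `L ω t x` of the process `X`, characterized as the occupation density:
`∫₀ᵗ g(X s) ds = ∫ g(a) L(t, a) da`. -/
def IsLocalTime (P : Measure Ω) (X : Ω → ℝ → ℝ) (L : Ω → ℝ → ℝ → ℝ) : Prop :=
  (∀ t x, Measurable fun ω => L ω t x) ∧
  ∀ᵐ ω ∂P,
    (∀ x, Monotone fun t => L ω t x) ∧
    (∀ x, L ω 0 x = 0) ∧
    (Continuous fun p : ℝ × ℝ => L ω p.1 p.2) ∧
    ∀ g : ℝ → ℝ, Measurable g → (∃ C, ∀ x, |g x| ≤ C) → ∀ t, 0 ≤ t →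
      ∫ s in Icc (0:ℝ) t, g (X ω s) = ∫ a, g a * L ω t a

/-- the local time (with respect to quadratic-variation time) of a process whose quadratic
variation is `⟨X⟩ t = ∫₀ᵗ w(s) ds`:  `∫₀ᵗ g(X s) d⟨X⟩ s = ∫ g(a) L(t, a) da`. -/
def IsWeightedLocalTime (P : Measure Ω) (X : Ω → ℝ → ℝ) (w : ℝ → ℝ)
    (L : Ω → ℝ → ℝ → ℝ) : Prop :=
  (∀ t x, Measurable fun ω => L ω t x) ∧
  ∀ᵐ ω ∂P,
    (∀ x, Monotone fun t => L ω t x) ∧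
    (∀ x, L ω 0 x = 0) ∧
    ∀ g : ℝ → ℝ, Measurable g → (∃ C, ∀ x, |g x| ≤ C) → ∀ t, 0 ≤ t →
      ∫ s in Icc (0:ℝ) t, g (X ω s) * w s = ∫ a, g a * L ω t a

/-- the Lebesgue–Stieltjes measure associated to a monotone function `F` (junk value `0` if `F`
is not monotone). -/
def lsMeasure (F : ℝ → ℝ) : Measure ℝ :=
  if h : Monotone F then h.stieltjesFunction.measure else 0

/-- the Riemann–Stieltjes (Lebesgue–Stieltjes) integral `∫₀ᵗ g dF`. -/
def rsInt (F : ℝ → ℝ) (g : ℝ → ℝ) (t : ℝ) : ℝ :=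
  ∫ s in Icc (0:ℝ) t, g s ∂(lsMeasure F)

/-- the vector-valued Riemann–Stieltjes integral `∫₀ᵗ g dF`. -/
def rsIntVec {d : ℕ} (F : ℝ → ℝ) (g : ℝ → Vec d) (t : ℝ) : Vec d :=
  fun i => ∫ s in Icc (0:ℝ) t, g s i ∂(lsMeasure F)

/-- the square root of a positive semidefinite matrix (junk value `0` otherwise). -/
def msqrt {d : ℕ} (A : Mat d) : Mat d :=
  if h : A.PosSemidef then
    h.1.eigenvectorUnitary.1 * Matrix.diagonal (RCLike.ofReal ∘ Real.sqrt ∘ h.1.eigenvalues) *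
      (star h.1.eigenvectorUnitary : Mat d) else 0

/-- a real-valued process which is a martingale on `[0, ∞)` for the filtration `ℱ`. -/
def IsMartOn (P : Measure Ω) (ℱ : Filtration ℝ mΩ) (f : ℝ → Ω → ℝ) : Prop :=
  (∀ t, 0 ≤ t → Integrable (f t) P) ∧
  (∀ t, 0 ≤ t → StronglyMeasurable[ℱ t] (f t)) ∧
  ∀ s t : ℝ, 0 ≤ s → s ≤ t → P[f t | ℱ s] =ᵐ[P] f s

/-- a Brownian motion adapted to the filtration `ℱ` whose increments are independent of the past. -/
def IsFilteredBM (P : Measure Ω) (ℱ : Filtration ℝ mΩ) (W : Ω → ℝ → ℝ) : Prop :=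
  IsBM P W ∧ (∀ t, 0 ≤ t → StronglyMeasurable[ℱ t] fun ω => W ω t) ∧
  ∀ s t : ℝ, 0 ≤ s → s ≤ t →
    Indep (MeasurableSpace.comap (fun ω => W ω t - W ω s) inferInstance) (ℱ s) P

/-- a `d`-dimensional Brownian motion adapted to the filtration `ℱ` whose increments are
independent of the past. -/
def IsFilteredBMVec (d : ℕ) (P : Measure Ω) (ℱ : Filtration ℝ mΩ)
    (W : Ω → ℝ → Vec d) : Prop :=
  IsBMVec d P W ∧ (∀ t, 0 ≤ t → StronglyMeasurable[ℱ t] fun ω => W ω t) ∧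
  ∀ s t : ℝ, 0 ≤ s → s ≤ t →
    Indep (MeasurableSpace.comap (fun ω => W ω t - W ω s) inferInstance) (ℱ s) P

/-- `M t = ∫₀ᵗ H s dW s` : characterization of the (real-valued) Itô stochastic integral of an
adapted process `H` against a Brownian motion `W`, via the standard martingale characterization:
`M` is a continuous martingale vanishing at `0`, the covariation of `M` with `W` is `∫₀ᵗ H ds`
(i.e. `M W - ∫₀ᵗ H ds` is a martingale), and the quadratic variation of `M` is `∫₀ᵗ H² ds`. -/
def IsItoIntegral (P : Measure Ω) (ℱ : Filtration ℝ mΩ) (W : Ω → ℝ → ℝ)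
    (H : Ω → ℝ → ℝ) (M : Ω → ℝ → ℝ) : Prop :=
  (∀ ω, M ω 0 = 0) ∧ (∀ᵐ ω ∂P, Continuous (M ω)) ∧
  (∀ t, 0 ≤ t → MemLp (fun ω => M ω t) 2 P) ∧
  IsMartOn P ℱ (fun t ω => M ω t) ∧
  IsMartOn P ℱ (fun t ω => M ω t * W ω t - ∫ s in Icc (0:ℝ) t, H ω s) ∧
  IsMartOn P ℱ (fun t ω => M ω t ^ 2 - ∫ s in Icc (0:ℝ) t, (H ω s) ^ 2)

/-- `M t = ∫₀ᵗ H s dW s` : characterization of the vector-valued Itô integral of a matrix-valued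
adapted process `H` against an `r`-dimensional Brownian motion `W`, via the martingale
characterization of its components, covariations with `W`, and quadratic covariations. -/
def IsItoIntegralVec (d r : ℕ) (P : Measure Ω) (ℱ : Filtration ℝ mΩ)
    (W : Ω → ℝ → Vec r) (H : Ω → ℝ → Matrix (Fin d) (Fin r) ℝ)
    (M : Ω → ℝ → Vec d) : Prop :=
  (∀ ω, M ω 0 = 0) ∧ (∀ᵐ ω ∂P, Continuous (M ω)) ∧
  (∀ t, 0 ≤ t → ∀ i, MemLp (fun ω => M ω t i) 2 P) ∧
  (∀ i, IsMartOn P ℱ (fun t ω => M ω t i)) ∧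
  (∀ i j, IsMartOn P ℱ
    (fun t ω => M ω t i * W ω t j - ∫ s in Icc (0:ℝ) t, H ω s i j)) ∧
  (∀ i j, IsMartOn P ℱ
    (fun t ω => M ω t i * M ω t j - ∫ s in Icc (0:ℝ) t, (H ω s * (H ω s)ᵀ) i j))

/-- `Y` solves the slow SDE
`dY = [b₁(Y) + b₂(ε⁻¹ W₁(t), Y)] dt + σ(ε⁻¹ W₁(t), Y) dW₂`, `Y 0 = y₀`. -/
def SolvesSlowSDE (d : ℕ) (P : Measure Ω) (W₁ : Ω → ℝ → ℝ) (W₂ : Ω → ℝ → Vec d)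
    (b₁ : Vec d → Vec d) (b₂ : ℝ → Vec d → Vec d) (σ : ℝ → Vec d → Mat d)
    (y₀ : Vec d) (ε : ℝ) (Y : Ω → ℝ → Vec d) : Prop :=
  ∃ ℱ : Filtration ℝ mΩ, IsFilteredBM P ℱ W₁ ∧ IsFilteredBMVec d P ℱ W₂ ∧
    (∀ t, 0 ≤ t → StronglyMeasurable[ℱ t] fun ω => Y ω t) ∧
    (∀ᵐ ω ∂P, Continuous (Y ω)) ∧
    ∃ M : Ω → ℝ → Vec d,
      IsItoIntegralVec d d P ℱ W₂ (fun ω s => σ (ε⁻¹ * W₁ ω s) (Y ω s)) M ∧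
      ∀ᵐ ω ∂P, ∀ t, 0 ≤ t →
        Y ω t = y₀ + (∫ s in Icc (0:ℝ) t,
          (b₁ (Y ω s) + b₂ (ε⁻¹ * W₁ ω s) (Y ω s))) + M ω t

/-- `(X, Y)` solves the fast–slow system
`dX = ε⁻¹ [ψ₁(Y) + ψ₂(X, Y)] dW₁`, `X 0 = 0`,
`dY = [b₁(Y) + b₂(X, Y)] dt + σ(X, Y) dW₂`, `Y 0 = y₀`. -/
def SolvesFastSlow (d : ℕ) (P : Measure Ω) (W₁ : Ω → ℝ → ℝ) (W₂ : Ω → ℝ → Vec d)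
    (ψ₁ : Vec d → ℝ) (ψ₂ : ℝ → Vec d → ℝ)
    (b₁ : Vec d → Vec d) (b₂ : ℝ → Vec d → Vec d) (σ : ℝ → Vec d → Mat d)
    (y₀ : Vec d) (ε : ℝ) (X : Ω → ℝ → ℝ) (Y : Ω → ℝ → Vec d) : Prop :=
  ∃ ℱ : Filtration ℝ mΩ, IsFilteredBM P ℱ W₁ ∧ IsFilteredBMVec d P ℱ W₂ ∧
    (∀ t, 0 ≤ t → StronglyMeasurable[ℱ t] fun ω => X ω t) ∧
    (∀ t, 0 ≤ t → StronglyMeasurable[ℱ t] fun ω => Y ω t) ∧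
    (∀ᵐ ω ∂P, Continuous (X ω) ∧ Continuous (Y ω)) ∧
    IsItoIntegral P ℱ W₁ (fun ω t => ε⁻¹ * (ψ₁ (Y ω t) + ψ₂ (X ω t) (Y ω t))) X ∧
    ∃ M : Ω → ℝ → Vec d,
      IsItoIntegralVec d d P ℱ W₂ (fun ω s => σ (X ω s) (Y ω s)) M ∧
      ∀ᵐ ω ∂P, ∀ t, 0 ≤ t →
        Y ω t = y₀ + (∫ s in Icc (0:ℝ) t,
          (b₁ (Y ω s) + b₂ (X ω s) (Y ω s))) + M ω t

/-- the path space `C([0,∞), ℝ^d)`, realized as functions `ℝ → ℝ^d` with the topology of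
uniform convergence on compact sets. -/
abbrev PathSp (d : ℕ) := UniformOnFun ℝ (Vec d) {K : Set ℝ | IsCompact K}

abbrev toPath {d : ℕ} (f : ℝ → Vec d) : PathSp d :=
  UniformOnFun.ofFun {K : Set ℝ | IsCompact K} f

/-- the path space of real-valued paths with the topology of uniform convergence on compacts. -/
abbrev PathSp1 := UniformOnFun ℝ ℝ {K : Set ℝ | IsCompact K}

abbrev toPath1 (f : ℝ → ℝ) : PathSp1 :=
  UniformOnFun.ofFun {K : Set ℝ | IsCompact K} f

/-- the path space `C([0,T], ℝ^d)`, realized as functions `ℝ → ℝ^d` with the topology of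
uniform convergence on `[0,T]`. -/
abbrev PathSpT (d : ℕ) (T : ℝ) := UniformOnFun ℝ (Vec d) {Icc (0:ℝ) T}

abbrev toPathT {d : ℕ} (T : ℝ) (f : ℝ → Vec d) : PathSpT d T :=
  UniformOnFun.ofFun {Icc (0:ℝ) T} f

/-- convergence in distribution (weak convergence of laws), as `ε → 0⁺`, of the `E`-valued random
elements `X ε` (on `(Ω, P)`) to the random element `Z` (on `(Ω', P')`): the expectations of every
bounded continuous functional converge. -/
def TendstoInLaw {Ω' : Type*} [MeasurableSpace Ω'] {E : Type*} [TopologicalSpace E]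
    (P : Measure Ω) (X : ℝ → Ω → E) (P' : Measure Ω') (Z : Ω' → E) : Prop :=
  ∀ f : E → ℝ, Continuous f → (∃ C, ∀ x, |f x| ≤ C) →
    Tendsto (fun ε => ∫ ω, f (X ε ω) ∂P) (nhdsWithin 0 (Ioi 0))
      (𝓝 (∫ ω, f (Z ω) ∂P'))

/-- `J t = ∫₀ᵗ ψ(s) dV(s)` with `V(t) = W(F(t))` for a `d`-dimensional Brownian motion `W`
independent of the conditioning process `G`: conditionally on `G`, the process `J` is centered
Gaussian with conditional covariance `Cov(J t, J t') = ∫₀^{min(t,t')} ψ ψᵀ dF`, expressed through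
the conditional characteristic functions of the finite-dimensional distributions. -/
def IsCondGaussDriven (d : ℕ) (P : Measure Ω) (G : Ω → ℝ → ℝ) (F : Ω → ℝ → ℝ)
    (ψ : ℝ → Mat d) (J : Ω → ℝ → Vec d) : Prop :=
  ∀ (n : ℕ) (t : Fin n → ℝ) (l : Fin n → Vec d), (∀ k, 0 ≤ t k) →
    (P[fun ω => Complex.exp (Complex.I * (∑ k, dotp (l k) (J ω (t k)) : ℝ)) |
        MeasurableSpace.comap G inferInstance])
      =ᵐ[P] fun ω => Complex.exp (↑(-(1/2 : ℝ) * ∑ k, ∑ k',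
          rsInt (F ω) (fun s => dotp ((ψ s * (ψ s)ᵀ).mulVec (l k)) (l k'))
            (min (t k) (t k'))))

/-- `ζ` solves the linear equation `ζ(t) = ∫₀ᵗ D b₁(y(s)) ζ(s) ds + J(t)`, `ζ(0) = 0`,
with a.s. continuous paths. -/
def SolvesLinear (d : ℕ) (P : Measure Ω) (b₁ : Vec d → Vec d) (y : ℝ → Vec d)
    (J : Ω → ℝ → Vec d) (ζ : Ω → ℝ → Vec d) : Prop :=
  ∀ᵐ ω ∂P, Continuous (ζ ω) ∧ ζ ω 0 = 0 ∧
    ∀ t, 0 ≤ t →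
      ζ ω t = (∫ s in Icc (0:ℝ) t, fderiv ℝ b₁ (y s) (ζ ω s)) + J ω t

/-- a matrix-valued step function, given by partition points `pts 0 ≤ pts 1 ≤ ...` and
values `coef k` on `[pts k, pts (k+1))`. -/
structure StepMat (d : ℕ) where
  n : ℕ
  pts : ℕ → ℝ
  coef : ℕ → Mat d

/-- the step function `ℝ → Mat d` associated to the data `S`. -/
def StepMat.fn {d : ℕ} (S : StepMat d) : ℝ → Mat d := fun s =>
  ∑ k ∈ Finset.range S.n, if s ∈ Ico (S.pts k) (S.pts (k + 1)) then S.coef k else 0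

/-- the elementary stochastic integral `∫ S.fn dV = ∑ₖ ψₖ (V(t_{k+1}) − V(tₖ))` of a step
function against a vector-valued process `V`. -/
def StepMat.itg {d : ℕ} {Ω : Type*} (S : StepMat d) (V : Ω → ℝ → Vec d) (ω : Ω) : Vec d :=
  ∑ k ∈ Finset.range S.n, (S.coef k).mulVec (V ω (S.pts (k + 1)) - V ω (S.pts k))

/-! Tonelli swaps the expectation and the time integral. At a time `s > 0` the law of `W₁ s` has a
density bounded by `(2 √s)⁻¹`, so `E[g(ε⁻¹ W₁ s)] ≤ (2 √s)⁻¹ ∫ g(ε⁻¹ x) dx = ε (2 √s)⁻¹ ‖g‖₁`.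
Integrating over `s ∈ [0, t]` gives `ε ‖g‖₁ √t`, and the factor `ε` cancels the prefactor `ε⁻¹`, so
`C = 1` works. Uniformity in `N` then follows because the tails of an integrable function have
vanishing `L¹` norm. -/

open scoped NNReal ENNReal

theorem ofReal_integral_le_lintegral_ofReal {α : Type*} [MeasurableSpace α] {μ : Measure α}
    {f : α → ℝ} (hf : ∀ x, 0 ≤ f x) :
    ENNReal.ofReal (∫ x, f x ∂μ) ≤ ∫⁻ x, ENNReal.ofReal (f x) ∂μ := by
  by_cases hfi : Integrable f μ
  · rw [ofReal_integral_eq_lintegral_ofReal hfi (ae_of_all _ hf)]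
  · simp [integral_undef hfi]

theorem AEMeasurable.exists_measurable_ge_ae_eq {α : Type*} [MeasurableSpace α] {μ : Measure α}
    {f : α → ℝ≥0∞} (hf : AEMeasurable f μ) :
    ∃ G : α → ℝ≥0∞, Measurable G ∧ f ≤ G ∧ f =ᵐ[μ] G := by
  obtain ⟨E, hfE, hE, hE0⟩ := exists_measurable_superset_of_null (ae_iff.1 hf.ae_eq_mk)
  have hf_eq : ∀ x ∉ E, f x = hf.mk f x := fun x hx => not_not.1 fun h => hx (hfE h)
  refine ⟨E.piecewise ⊤ (hf.mk f), Measurable.piecewise hE measurable_const hf.measurable_mk,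
    fun x => ?_, ?_⟩
  · by_cases hx : x ∈ E
    · simp [hx]
    · rw [Set.piecewise_eq_of_notMem _ _ _ hx, hf_eq x hx]
  · filter_upwards [measure_eq_zero_iff_ae_notMem.1 hE0] with x hx
    rw [Set.piecewise_eq_of_notMem _ _ _ hx, hf_eq x hx]

theorem lintegral_comp_mul_left {c : ℝ} (hc : c ≠ 0) {G : ℝ → ℝ≥0∞} (hG : Measurable G) :
    ∫⁻ x, G (c * x) = ENNReal.ofReal |c⁻¹| * ∫⁻ x, G x := by
  rw [← lintegral_map hG (measurable_const_mul c), Real.map_volume_mul_left hc,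
    lintegral_smul_measure, smul_eq_mul]

theorem lintegral_inv_two_mul_sqrt {t : ℝ} (ht : 0 ≤ t) :
    ∫⁻ s in Ioc 0 t, ENNReal.ofReal (2 * √s)⁻¹ = ENNReal.ofReal √t := by
  have hrpow : ∀ s ∈ Ioc (0 : ℝ) t, (2 * √s)⁻¹ = 2⁻¹ * s ^ (-(1 / 2) : ℝ) := fun s hs => by
    rw [mul_inv, Real.sqrt_eq_rpow, ← Real.rpow_neg hs.1.le]
  have hint : IntegrableOn (fun s : ℝ => 2⁻¹ * s ^ (-(1 / 2) : ℝ)) (Ioc 0 t) := by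
    rw [← intervalIntegrable_iff_integrableOn_Ioc_of_le ht]
    exact (intervalIntegral.intervalIntegrable_rpow' (by norm_num)).const_mul _
  rw [setLIntegral_congr_fun measurableSet_Ioc fun s hs => by rw [hrpow s hs],
    ← ofReal_integral_eq_lintegral_ofReal hint
      ((ae_restrict_iff' measurableSet_Ioc).2 (ae_of_all _ fun s hs => by
        have := Real.rpow_nonneg hs.1.le (-(1 / 2) : ℝ); positivity)),
    ← intervalIntegral.integral_of_le ht, intervalIntegral.integral_const_mul,
    integral_rpow (Or.inl (by norm_num)), Real.zero_rpow (by norm_num), Real.sqrt_eq_rpow]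
  congr 1
  norm_num
  ring

theorem tendsto_integral_abs_indicator_abs_gt {f : ℝ → ℝ} (hf : Integrable f) :
    Tendsto (fun N : ℝ => ∫ x, |indicator {x : ℝ | N < |x|} f x|) atTop (𝓝 0) := by
  have hS : ∀ N : ℝ, MeasurableSet {x : ℝ | N < |x|} := fun N =>
    measurableSet_lt measurable_const measurable_abs
  have hlim : ∀ x, Tendsto (fun N : ℝ => |indicator {x : ℝ | N < |x|} f x|) atTop (𝓝 0) :=
    fun x => tendsto_const_nhds.congr' <| (eventually_ge_atTop |x|).mono fun N hN => by
      simp only [indicator_of_notMem (s := {x : ℝ | N < |x|}) (not_lt.2 hN), abs_zero]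
  simpa using tendsto_integral_filter_of_dominated_convergence (fun x => |f x|)
    (Eventually.of_forall fun N => ((hf.indicator (hS N)).abs).aestronglyMeasurable)
    (Eventually.of_forall fun N => ae_of_all _ fun x => by
      simpa only [Real.norm_eq_abs, abs_abs] using norm_indicator_le_norm_self f x)
    hf.abs (ae_of_all _ hlim)

theorem gaussianPDFReal_le (μ : ℝ) (v : ℝ≥0) (x : ℝ) :
    gaussianPDFReal μ v x ≤ (√(2 * Real.pi * v))⁻¹ := by
  rw [gaussianPDFReal_def]
  refine mul_le_of_le_one_right (by positivity) (Real.exp_le_one_iff.2 ?_)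
  exact div_nonpos_of_nonpos_of_nonneg (neg_nonpos.2 (sq_nonneg _)) (by positivity)

theorem lintegral_gaussianReal_le (μ : ℝ) {v : ℝ≥0} (hv : v ≠ 0) (G : ℝ → ℝ≥0∞) :
    ∫⁻ x, G x ∂gaussianReal μ v ≤ ENNReal.ofReal (√(2 * Real.pi * v))⁻¹ * ∫⁻ x, G x := by
  rw [gaussianReal_of_var_ne_zero μ hv, ← lintegral_const_mul' _ _ ENNReal.ofReal_ne_top]
  refine (lintegral_withDensity_le_lintegral_mul _ (measurable_gaussianPDF μ v) G).trans ?_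
  exact lintegral_mono fun x =>
    mul_le_mul_left (ENNReal.ofReal_le_ofReal (gaussianPDFReal_le μ v x)) _

theorem aemeasurable_uncurry_of_ae_continuous (P : Measure Ω) {W : Ω → ℝ → ℝ}
    (hmeas : ∀ s, Measurable fun ω => W ω s) (hcont : ∀ᵐ ω ∂P, Continuous (W ω))
    (μ : Measure ℝ) [SFinite μ] : AEMeasurable (Function.uncurry W) (P.prod μ) := by
  obtain ⟨T, hT, hTm, hTcont⟩ := hcont.exists_measurable_mem
  set W' : Ω → ℝ → ℝ := fun ω s => if ω ∈ T then W ω s else 0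
  have hW' : Measurable (Function.uncurry fun s ω => W' ω s) := by
    refine measurable_uncurry_of_continuous_of_measurable (fun ω => ?_) (fun s => ?_)
    · by_cases hω : ω ∈ T
      · simpa [W', hω] using hTcont ω hω
      · simp [W', hω, continuous_const]
    · exact Measurable.ite hTm (hmeas s) measurable_const
  refine ⟨fun p => W' p.1 p.2, hW'.comp measurable_swap, ?_⟩
  have hnull : (P.prod μ) (Tᶜ ×ˢ univ) = 0 := by
    rw [Measure.prod_prod, mem_ae_iff.1 hT, zero_mul]
  filter_upwards [measure_eq_zero_iff_ae_notMem.1 hnull] with p hp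
  have hpT : p.1 ∈ T := by simpa using hp
  simp [W', hpT, Function.uncurry]

theorem lintegral_lintegral_comp_le_sqrt_mul (P : Measure Ω) [SFinite P] {W : Ω → ℝ → ℝ}
    (hmeas : ∀ s, Measurable fun ω => W ω s) (hcont : ∀ᵐ ω ∂P, Continuous (W ω))
    (hlaw : ∀ s, 0 < s → P.map (fun ω => W ω s) = gaussianReal 0 s.toNNReal)
    {G : ℝ → ℝ≥0∞} (hG : Measurable G) {t : ℝ} (ht : 0 ≤ t) :
    ∫⁻ ω, (∫⁻ s in Icc (0 : ℝ) t, G (W ω s)) ∂P ≤ ENNReal.ofReal √t * ∫⁻ x, G x := by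
  have hmarginal : ∀ s ∈ Ioc (0 : ℝ) t,
      ∫⁻ ω, G (W ω s) ∂P ≤ ENNReal.ofReal (2 * √s)⁻¹ * ∫⁻ x, G x := fun s hs => by
    have hs0 : s.toNNReal ≠ 0 := by simpa using hs.1
    have hpdf : (√(2 * Real.pi * s.toNNReal))⁻¹ ≤ (2 * √s)⁻¹ := by
      rw [Real.coe_toNNReal s hs.1.le, Real.sqrt_mul' _ hs.1.le]
      refine inv_anti₀ (by have := hs.1; positivity)
        (mul_le_mul_of_nonneg_right ?_ (Real.sqrt_nonneg s))
      rw [Real.le_sqrt zero_le_two (by positivity)]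
      nlinarith [Real.pi_gt_three]
    rw [← lintegral_map hG (hmeas s), hlaw s hs.1]
    exact (lintegral_gaussianReal_le 0 hs0 G).trans (by gcongr)
  calc ∫⁻ ω, (∫⁻ s in Icc (0 : ℝ) t, G (W ω s)) ∂P
      = ∫⁻ s in Ioc 0 t, ∫⁻ ω, G (W ω s) ∂P := by
        rw [lintegral_lintegral_swap (f := fun ω s => G (W ω s)) (hG.comp_aemeasurable
          (aemeasurable_uncurry_of_ae_continuous P hmeas hcont _)),
          Measure.restrict_congr_set Ioc_ae_eq_Icc]
    _ ≤ ∫⁻ s in Ioc 0 t, ENNReal.ofReal (2 * √s)⁻¹ * ∫⁻ x, G x :=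
        setLIntegral_mono' measurableSet_Ioc hmarginal
    _ = ENNReal.ofReal √t * ∫⁻ x, G x := by
        rw [lintegral_mul_const _ (by fun_prop), lintegral_inv_two_mul_sqrt ht]

theorem integral_scaled_occupation_le (P : Measure Ω) [SFinite P] {W : Ω → ℝ → ℝ}
    (hmeas : ∀ s, Measurable fun ω => W ω s) (hcont : ∀ᵐ ω ∂P, Continuous (W ω))
    (hlaw : ∀ s, 0 < s → P.map (fun ω => W ω s) = gaussianReal 0 s.toNNReal)
    {g : ℝ → ℝ} (hg : Integrable g) (hg0 : ∀ x, 0 ≤ g x) {ε : ℝ} (hε : 0 < ε) {t : ℝ}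
    (ht : 0 ≤ t) :
    ∫ ω, (ε⁻¹ * ∫ s in Icc (0 : ℝ) t, g (ε⁻¹ * W ω s)) ∂P ≤ (∫ x, g x) * √t := by
  -- `g` is only a.e. measurable; a measurable majorant with the same integral makes the
  -- integrand jointly measurable, as Tonelli requires.
  obtain ⟨G, hG, hgG, hgG_ae⟩ :=
    AEMeasurable.exists_measurable_ge_ae_eq hg.aemeasurable.ennreal_ofReal
  have hGint : ∫⁻ x, G x = ENNReal.ofReal (∫ x, g x) := by
    rw [← lintegral_congr_ae hgG_ae, ofReal_integral_eq_lintegral_ofReal hg (ae_of_all _ hg0)]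
  rw [← ENNReal.ofReal_le_ofReal_iff (mul_nonneg (integral_nonneg hg0) (Real.sqrt_nonneg t))]
  calc ENNReal.ofReal (∫ ω, (ε⁻¹ * ∫ s in Icc (0 : ℝ) t, g (ε⁻¹ * W ω s)) ∂P)
      ≤ ∫⁻ ω, (ENNReal.ofReal ε⁻¹ * ∫⁻ s in Icc (0 : ℝ) t, G (ε⁻¹ * W ω s)) ∂P := by
        refine (ofReal_integral_le_lintegral_ofReal fun ω => ?_).trans
          (lintegral_mono fun ω => ?_)
        · exact mul_nonneg (inv_nonneg.2 hε.le) (integral_nonneg fun s => hg0 _)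
        rw [ENNReal.ofReal_mul (inv_nonneg.2 hε.le)]
        gcongr
        exact (ofReal_integral_le_lintegral_ofReal fun s => hg0 _).trans
          (lintegral_mono fun s => hgG _)
    _ ≤ ENNReal.ofReal ε⁻¹ * (ENNReal.ofReal √t * ∫⁻ x, G (ε⁻¹ * x)) := by
        rw [lintegral_const_mul' _ _ ENNReal.ofReal_ne_top]
        gcongr
        exact lintegral_lintegral_comp_le_sqrt_mul P hmeas hcont hlaw
          (hG.comp (measurable_const_mul _)) ht
    _ = ENNReal.ofReal ((∫ x, g x) * √t) := by
        rw [lintegral_comp_mul_left (inv_ne_zero hε.ne') hG, hGint, inv_inv, abs_of_pos hε,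
          ← ENNReal.ofReal_mul hε.le, ← ENNReal.ofReal_mul (Real.sqrt_nonneg t),
          ← ENNReal.ofReal_mul (inv_nonneg.2 hε.le)]
        congr 1
        field_simp

theorem IsBM.map_eq_gaussianReal {P : Measure Ω} {W : Ω → ℝ → ℝ} (hW : IsBM P W) {s : ℝ}
    (hs : 0 ≤ s) : P.map (fun ω => W ω s) = gaussianReal 0 s.toNNReal := by
  simpa only [hW.1, sub_zero] using hW.2.2.2.1 0 s le_rfl hs

/-- `sup_{ε>0} E[ε⁻¹ ∫₀ᵗ σ̂²(ε⁻¹W₁(s)) 𝟙_{|ε⁻¹W₁(s)|>N} ds] ≤ C ‖σ̂² 𝟙_{|x|>N}‖₁ √t` for an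
absolute constant `C`; in particular, since `σ̂² ∈ L¹(ℝ)`, the bound tends to `0` as `N → ∞`
uniformly in `ε`. -/
theorem tail_occupation_bound
    {Ω : Type} {mΩ : MeasurableSpace Ω} (P : Measure Ω) [IsProbabilityMeasure P]
    (W₁ : Ω → ℝ → ℝ) (hW₁ : IsBM P W₁)
    (σhat : ℝ → ℝ) (hσhat : Integrable σhat) (hσpos : ∀ x, 0 ≤ σhat x) :
    (∃ C : ℝ, 0 < C ∧ ∀ N : ℝ, 0 < N → ∀ t : ℝ, 0 < t → ∀ ε : ℝ, 0 < ε →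
      (∫ ω, (ε⁻¹ * ∫ s in Icc (0:ℝ) t,
          indicator {x : ℝ | N < |x|} σhat (ε⁻¹ * W₁ ω s)) ∂P)
        ≤ C * (∫ x : ℝ, |indicator {x : ℝ | N < |x|} σhat x|) * Real.sqrt t) ∧
    ∀ t : ℝ, 0 < t → ∀ δ : ℝ, 0 < δ → ∃ N₀ : ℝ, ∀ N : ℝ, N₀ ≤ N → ∀ ε : ℝ, 0 < ε →
      (∫ ω, (ε⁻¹ * ∫ s in Icc (0:ℝ) t,
          indicator {x : ℝ | N < |x|} σhat (ε⁻¹ * W₁ ω s)) ∂P) ≤ δ := by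
  have hbound : ∀ N t : ℝ, 0 < t → ∀ ε : ℝ, 0 < ε →
      (∫ ω, (ε⁻¹ * ∫ s in Icc (0:ℝ) t,
          indicator {x : ℝ | N < |x|} σhat (ε⁻¹ * W₁ ω s)) ∂P)
        ≤ (∫ x : ℝ, |indicator {x : ℝ | N < |x|} σhat x|) * √t := by
    intro N t ht ε hε
    have hg0 : ∀ x, 0 ≤ indicator {x : ℝ | N < |x|} σhat x :=
      indicator_nonneg fun y _ => hσpos y
    simpa only [abs_of_nonneg (hg0 _)] using
      integral_scaled_occupation_le P hW₁.2.1 hW₁.2.2.1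
        (fun s hs => hW₁.map_eq_gaussianReal hs.le)
        (hσhat.indicator (measurableSet_lt measurable_const measurable_abs)) hg0 hε ht.le
  refine ⟨⟨1, one_pos, fun N _ t ht ε hε => by simpa only [one_mul] using hbound N t ht ε hε⟩,
    fun t ht δ hδ => ?_⟩
  have hsqrt : 0 < √t := Real.sqrt_pos.2 ht
  obtain ⟨N₀, hN₀⟩ := eventually_atTop.1 <|
    (tendsto_order.1 (tendsto_integral_abs_indicator_abs_gt hσhat)).2 _ (div_pos hδ hsqrt)
  refine ⟨N₀, fun N hN ε hε => (hbound N t ht ε hε).trans ?_⟩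
  calc _ ≤ δ / √t * √t := by gcongr; exact (hN₀ N hN).le
    _ = δ := div_mul_cancel₀ δ hsqrt.ne'

end PGS
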